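/- arXiv:1302.3082 — 3 statements merged into one kernel-verified Lean document; each statement's English description precedes it below -/
import Mathlib

section
/- The 3×3 symmetric matrix A with ones on the diagonal, A₁₂ = A₂₁ = A₂₃ = A₃₂ = 0.7, and A₁₃ = A₃₁ = 0 is positive definite, but the matrix B obtained by applying the map x ↦ 2 sin(πx/6) entrywise to A (i.e., B has ones on the diagonal, B₁₂ = B₂₃ = 2 sin(0.7π/6), B₁₃ = 0) is not positive semidefinite. -/
lemma sin_key : Real.sqrt 2 / 2 < 2 * Real.sin (Real.pi * 0.7 / 6) := by
  set x := Real.pi * 0.7 / 6 with hx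
  have hpi1 : 3.141592 < Real.pi := Real.pi_gt_d6
  have hpi2 : Real.pi < 3.141593 := Real.pi_lt_d6
  have hx1 : 0.366519 < x := by rw [hx]; nlinarith
  have hx2 : x < 0.36652 := by rw [hx]; nlinarith
  have h := Real.sin_gt_sub_cube (by linarith : (0:ℝ) < x)
  have hs : Real.sqrt 2 < 1.41422 := by
    nlinarith [Real.sq_sqrt (by norm_num : (0:ℝ) ≤ 2), Real.sqrt_nonneg 2]
  nlinarith [pow_le_pow_left₀ (by linarith : (0:ℝ) ≤ x) hx2.le 3]

/-- The matrix `A` (tridiagonal with off-diagonal 0.7) is positive definite, but the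
matrix obtained by applying `x ↦ 2 sin (π x / 6)` entrywise is not positive
semidefinite. -/
theorem adjusted_rank_matrix_indefinite
    (A : Matrix (Fin 3) (Fin 3) ℝ)
    (hA : A = !![1, 0.7, 0; 0.7, 1, 0.7; 0, 0.7, 1]) :
    A.PosDef ∧ ¬ (A.map (fun x => 2 * Real.sin (Real.pi * x / 6))).PosSemidef := by
  subst hA
  constructor
  · rw [Matrix.posDef_iff_dotProduct_mulVec]
    constructor
    · ext i j
      fin_cases i <;> fin_cases j <;>
        simp [Matrix.conjTranspose_apply]
    · intro x hx
      have h3 : ∃ i, x i ≠ 0 := by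
        by_contra h; push_neg at h; exact hx (funext h)
      simp only [dotProduct, Matrix.mulVec, Fin.sum_univ_three, RCLike.star_def,
        star_trivial]
      norm_num [Matrix.cons_val_zero, Matrix.cons_val_one, Matrix.cons_val_two, Matrix.vecHead, Matrix.vecTail]
      obtain ⟨i, hi⟩ := h3
      have h0 : 0 < (x 0)^2 ∨ 0 < (x 1)^2 ∨ 0 < (x 2)^2 := by
        fin_cases i
        · exact Or.inl (sq_pos_of_ne_zero hi)
        · exact Or.inr (Or.inl (sq_pos_of_ne_zero hi))
        · exact Or.inr (Or.inr (sq_pos_of_ne_zero hi))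
      rcases h0 with h0 | h0 | h0 <;>
        nlinarith [sq_nonneg (x 0 + 0.7 * x 1), sq_nonneg (x 2 + 0.7 * x 1),
          sq_nonneg (x 1 + 0.7 * (x 0 + x 2)), sq_nonneg (x 0 - x 2), h0]
  · intro h
    have key := h.dotProduct_mulVec_nonneg ![1, -Real.sqrt 2, 1]
    have hs2 : Real.sqrt 2 ^ 2 = 2 := Real.sq_sqrt (by norm_num)
    have hsin := sin_key
    have hspos : 0 < Real.sqrt 2 := by positivity
    simp only [dotProduct, Matrix.mulVec, Fin.sum_univ_three, Matrix.map_apply,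
      RCLike.star_def, star_trivial] at key
    norm_num [Matrix.cons_val_zero, Matrix.cons_val_one, Matrix.cons_val_two, Matrix.vecHead, Matrix.vecTail, Real.sin_pi_div_six] at key
    nlinarith [mul_lt_mul_of_pos_left hsin hspos, key, hs2]
end

section
/- Let u_{ij} be the U-statistic u_{ij} = (3/(n(n−1)(n−2))) Σ_{k≠l, k≠m, l≠m} sign(x_{ki} − x_{li}) · sign(x_{kj} − x_{mj}) computed from n sample points x_1,...,x_n ∈ ℝ^p. If one sample point x_t is replaced by an arbitrary point x̂_t, the value of u_{ij} changes by at most 15/n in absolute value. -/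
private lemma sign_mono' {u v : ℝ} (h : u ≤ v) : Real.sign u ≤ Real.sign v := by
  unfold Real.sign
  split_ifs <;> linarith

private lemma sign_le_one' (u : ℝ) : Real.sign u ≤ 1 := by
  unfold Real.sign; split_ifs <;> norm_num

private lemma neg_one_le_sign' (u : ℝ) : -1 ≤ Real.sign u := by
  unfold Real.sign; split_ifs <;> norm_num

private lemma abs_sign_le' (u : ℝ) : |Real.sign u| ≤ 1 :=
  abs_le.2 ⟨neg_one_le_sign' u, sign_le_one' u⟩

private lemma abs_sign_mul_sign_le (u v : ℝ) : |Real.sign u * Real.sign v| ≤ 1 := by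
  rw [abs_mul]
  calc |Real.sign u| * |Real.sign v| ≤ 1 * 1 := by
        exact mul_le_mul (abs_sign_le' u) (abs_sign_le' v) (abs_nonneg _) zero_le_one
    _ = 1 := by norm_num

private lemma abs_sub_le_two' {a b : ℝ} (ha : |a| ≤ 1) (hb : |b| ≤ 1) : |a - b| ≤ 2 := by
  rw [abs_le] at *
  constructor <;> [linarith [ha.1, hb.2]; linarith [ha.2, hb.1]]

/-- The key cancellation: the two "delta of signs" with the same pair of pivots
differ by at most 2 (not 4), since they have the same sign. -/
private lemma sign_delta_diff (p q c c' : ℝ) :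
    |(Real.sign (p - c) - Real.sign (p - c')) -
      (Real.sign (q - c) - Real.sign (q - c'))| ≤ 2 := by
  have b1 := sign_le_one' (p - c); have b2 := neg_one_le_sign' (p - c)
  have b3 := sign_le_one' (p - c'); have b4 := neg_one_le_sign' (p - c')
  have b5 := sign_le_one' (q - c); have b6 := neg_one_le_sign' (q - c)
  have b7 := sign_le_one' (q - c'); have b8 := neg_one_le_sign' (q - c')
  rcases le_total c c' with hcc | hcc
  · have hp : Real.sign (p - c') ≤ Real.sign (p - c) := sign_mono' (by linarith)
    have hq : Real.sign (q - c') ≤ Real.sign (q - c) := sign_mono' (by linarith)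
    rw [abs_le]; constructor <;> linarith
  · have hp : Real.sign (p - c) ≤ Real.sign (p - c') := sign_mono' (by linarith)
    have hq : Real.sign (q - c) ≤ Real.sign (q - c') := sign_mono' (by linarith)
    rw [abs_le]; constructor <;> linarith

/-- Bound a double sum over a symmetric index set by pairing `(k,m)` with `(m,k)`. -/
private lemma sum_pair_bound {α : Type*} [DecidableEq α] (e : Finset α) (F : α → α → ℝ)
    (C : ℝ) (hC : 0 ≤ C)
    (hpair : ∀ k ∈ e, ∀ m ∈ e, k ≠ m → |F k m + F m k| ≤ 2 * C)
    (hdiag : ∀ k ∈ e, F k k = 0) :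
    |∑ k ∈ e, ∑ m ∈ e, F k m| ≤ C * e.card * (e.card - 1) := by
  have hswap : ∑ k ∈ e, ∑ m ∈ e, F m k = ∑ k ∈ e, ∑ m ∈ e, F k m := Finset.sum_comm
  have h2 : ∑ k ∈ e, ∑ m ∈ e, (F k m + F m k) = 2 * ∑ k ∈ e, ∑ m ∈ e, F k m := by
    simp only [Finset.sum_add_distrib]
    rw [hswap]; ring
  have hcount : ∑ k ∈ e, ∑ m ∈ e, (if k = m then (0:ℝ) else 2 * C)
      = 2 * C * e.card * (e.card - 1) := by
    have hinner : ∀ k ∈ e, ∑ m ∈ e, (if k = m then (0:ℝ) else 2 * C)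
        = 2 * C * e.card - 2 * C := by
      intro k hk
      have hre : ∀ m ∈ e, (if k = m then (0:ℝ) else 2 * C)
          = 2 * C - (if k = m then 2 * C else 0) := by
        intro m _; split_ifs <;> ring
      rw [Finset.sum_congr rfl hre, Finset.sum_sub_distrib, Finset.sum_ite_eq,
        Finset.sum_const, if_pos hk, nsmul_eq_mul]
      ring
    rw [Finset.sum_congr rfl hinner, Finset.sum_const, nsmul_eq_mul]
    ring
  have habs : |∑ k ∈ e, ∑ m ∈ e, (F k m + F m k)| ≤ 2 * C * e.card * (e.card - 1) := by
    rw [← hcount]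
    refine (Finset.abs_sum_le_sum_abs _ _).trans ?_
    refine Finset.sum_le_sum fun k hk => ?_
    refine (Finset.abs_sum_le_sum_abs _ _).trans ?_
    refine Finset.sum_le_sum fun m hm => ?_
    split_ifs with hkm
    · subst hkm; rw [hdiag k hk]; simp
    · exact hpair k hk m hm hkm
  rw [h2, abs_mul, abs_two] at habs
  linarith

/-- The Spearman U-statistic
`u_{ij} = (3/(n(n−1)(n−2))) Σ_{k≠l, k≠m, l≠m} sign(x_{ki} − x_{li}) sign(x_{kj} − x_{mj})`. -/
noncomputable def spearmanU {n p : ℕ} (i j : Fin p) (x : Fin n → Fin p → ℝ) : ℝ :=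
  (3 / ((n : ℝ) * ((n : ℝ) - 1) * ((n : ℝ) - 2))) *
    ∑ k : Fin n, ∑ l : Fin n, ∑ m : Fin n,
      if k ≠ l ∧ k ≠ m ∧ l ≠ m then
        Real.sign (x k i - x l i) * Real.sign (x k j - x m j)
      else 0

/-- If one sample point is replaced by an arbitrary point, the value of the U-statistic
`u_{ij}` changes by at most `15/n` in absolute value. -/
theorem spearmanU_bounded_difference
    {n p : ℕ} (hn : 3 ≤ n) (i j : Fin p)
    (x x' : Fin n → Fin p → ℝ) (t : Fin n)
    (h : ∀ s, s ≠ t → x' s = x s) :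
    |spearmanU i j x - spearmanU i j x'| ≤ 15 / (n : ℝ) := by
  classical
  have hn3 : (3:ℝ) ≤ (n:ℝ) := by exact_mod_cast hn
  have haa : ∀ k, k ≠ t → x' k i = x k i := fun k hk => by rw [h k hk]
  have hbb : ∀ k, k ≠ t → x' k j = x k j := fun k hk => by rw [h k hk]
  set T : Fin n → Fin n → Fin n → ℝ := fun k l m =>
    if k ≠ l ∧ k ≠ m ∧ l ≠ m then
      Real.sign (x k i - x l i) * Real.sign (x k j - x m j)
        - Real.sign (x' k i - x' l i) * Real.sign (x' k j - x' m j)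
    else 0 with hT
  have key : spearmanU i j x - spearmanU i j x' =
      (3 / ((n:ℝ) * ((n:ℝ) - 1) * ((n:ℝ) - 2))) * ∑ k, ∑ l, ∑ m, T k l m := by
    unfold spearmanU
    rw [← mul_sub]
    congr 1
    rw [← Finset.sum_sub_distrib]
    refine Finset.sum_congr rfl fun k _ => ?_
    rw [← Finset.sum_sub_distrib]
    refine Finset.sum_congr rfl fun l _ => ?_
    rw [← Finset.sum_sub_distrib]
    refine Finset.sum_congr rfl fun m _ => ?_
    simp only [hT]
    split_ifs <;> simp
  have hzero : ∀ k l m, k ≠ t → l ≠ t → m ≠ t → T k l m = 0 := by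
    intro k l m hk hl hm
    simp only [hT]
    rw [haa k hk, haa l hl, hbb k hk, hbb m hm]
    split_ifs <;> ring
  set e : Finset (Fin n) := Finset.univ.erase t with he
  have hcard : (e.card : ℝ) = (n:ℝ) - 1 := by
    have h1 : e.card = n - 1 := by
      rw [he, Finset.card_erase_of_mem (Finset.mem_univ t), Finset.card_univ, Fintype.card_fin]
    rw [h1, Nat.cast_sub (by omega)]; norm_num
  have hT2 : ∀ k l m, |T k l m| ≤ 2 := by
    intro k l m; simp only [hT]; split_ifs
    · exact abs_sub_le_two' (abs_sign_mul_sign_le _ _) (abs_sign_mul_sign_le _ _)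
    · norm_num
  -- splitting the sum into the three classes of triples containing t
  have stepA : ∑ l ∈ e, ∑ m ∈ e, T t l m = ∑ l, ∑ m, T t l m := by
    calc ∑ l ∈ e, ∑ m ∈ e, T t l m = ∑ l, ∑ m ∈ e, T t l m :=
          Finset.sum_erase _ (by simp [hT])
      _ = ∑ l, ∑ m, T t l m :=
          Finset.sum_congr rfl fun l _ => Finset.sum_erase _ (by simp [hT])
  have stepB : ∀ k ∈ e, (∑ l, ∑ m, T k l m) = (∑ m ∈ e, T k t m) + ∑ l ∈ e, T k l t := by
    intro k hk
    have hkt : k ≠ t := Finset.ne_of_mem_erase hk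
    rw [← Finset.add_sum_erase _ _ (Finset.mem_univ t)]
    congr 1
    · exact (Finset.sum_erase _ (by simp [hT])).symm
    · refine Finset.sum_congr rfl fun l hl => ?_
      have hlt : l ≠ t := Finset.ne_of_mem_erase hl
      exact Finset.sum_eq_single t (fun m _ hm => hzero k l m hkt hlt hm) (by simp)
  have hsplit : ∑ k, ∑ l, ∑ m, T k l m
      = (∑ l ∈ e, ∑ m ∈ e, T t l m)
        + ((∑ k ∈ e, ∑ m ∈ e, T k t m) + (∑ k ∈ e, ∑ l ∈ e, T k l t)) := by
    rw [← Finset.add_sum_erase _ _ (Finset.mem_univ t), ← stepA,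
      Finset.sum_congr rfl stepB, Finset.sum_add_distrib]
  -- class A : k = t
  have hA : |∑ l ∈ e, ∑ m ∈ e, T t l m| ≤ 2 * ((n:ℝ) - 1) * ((n:ℝ) - 2) := by
    refine le_of_le_of_eq (sum_pair_bound e (fun l m => T t l m) 2 (by norm_num)
      (fun l _ m _ _ => ?_) (fun l _ => by simp [hT])) (by rw [hcard]; ring)
    exact (abs_add_le _ _).trans (by linarith [hT2 t l m, hT2 t m l])
  -- class B : l = t
  have hB : |∑ k ∈ e, ∑ m ∈ e, T k t m| ≤ 1 * ((n:ℝ) - 1) * ((n:ℝ) - 2) := by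
    refine le_of_le_of_eq (sum_pair_bound e (fun k m => T k t m) 1 zero_le_one
      (fun k hk m hm hkm => ?_) (fun k _ => by simp [hT])) (by rw [hcard]; ring)
    have hkt : k ≠ t := Finset.ne_of_mem_erase hk
    have hmt : m ≠ t := Finset.ne_of_mem_erase hm
    have e1 : T k t m = (Real.sign (x k i - x t i) - Real.sign (x k i - x' t i))
        * Real.sign (x k j - x m j) := by
      simp only [hT]
      rw [if_pos ⟨hkt, hkm, fun hh => hmt hh.symm⟩, haa k hkt, hbb k hkt, hbb m hmt]
      ring
    have e2 : T m t k = (Real.sign (x m i - x t i) - Real.sign (x m i - x' t i))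
        * Real.sign (x m j - x k j) := by
      simp only [hT]
      rw [if_pos ⟨hmt, hkm.symm, fun hh => hkt hh.symm⟩, haa m hmt, hbb m hmt, hbb k hkt]
      ring
    have hanti : Real.sign (x m j - x k j) = -Real.sign (x k j - x m j) := by
      rw [← neg_sub, Real.sign_neg]
    have e3 : T k t m + T m t k
        = ((Real.sign (x k i - x t i) - Real.sign (x k i - x' t i))
            - (Real.sign (x m i - x t i) - Real.sign (x m i - x' t i)))
          * Real.sign (x k j - x m j) := by
      rw [e1, e2, hanti]; ring
    rw [e3, abs_mul]
    have hd := sign_delta_diff (x k i) (x m i) (x t i) (x' t i)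
    have hs := abs_sign_le' (x k j - x m j)
    have h1 := abs_nonneg ((Real.sign (x k i - x t i) - Real.sign (x k i - x' t i))
      - (Real.sign (x m i - x t i) - Real.sign (x m i - x' t i)))
    have h2 := abs_nonneg (Real.sign (x k j - x m j))
    nlinarith
  -- class C : m = t
  have hC : |∑ k ∈ e, ∑ l ∈ e, T k l t| ≤ 1 * ((n:ℝ) - 1) * ((n:ℝ) - 2) := by
    refine le_of_le_of_eq (sum_pair_bound e (fun k l => T k l t) 1 zero_le_one
      (fun k hk l hl hkl => ?_) (fun k _ => by simp [hT])) (by rw [hcard]; ring)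
    have hkt : k ≠ t := Finset.ne_of_mem_erase hk
    have hlt : l ≠ t := Finset.ne_of_mem_erase hl
    have e1 : T k l t = Real.sign (x k i - x l i)
        * (Real.sign (x k j - x t j) - Real.sign (x k j - x' t j)) := by
      simp only [hT]
      rw [if_pos ⟨hkl, hkt, hlt⟩, haa k hkt, haa l hlt, hbb k hkt]
      ring
    have e2 : T l k t = Real.sign (x l i - x k i)
        * (Real.sign (x l j - x t j) - Real.sign (x l j - x' t j)) := by
      simp only [hT]
      rw [if_pos ⟨hkl.symm, hlt, hkt⟩, haa l hlt, haa k hkt, hbb l hlt]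
      ring
    have hanti : Real.sign (x l i - x k i) = -Real.sign (x k i - x l i) := by
      rw [← neg_sub, Real.sign_neg]
    have e3 : T k l t + T l k t
        = Real.sign (x k i - x l i)
          * ((Real.sign (x k j - x t j) - Real.sign (x k j - x' t j))
            - (Real.sign (x l j - x t j) - Real.sign (x l j - x' t j))) := by
      rw [e1, e2, hanti]; ring
    rw [e3, abs_mul]
    have hd := sign_delta_diff (x k j) (x l j) (x t j) (x' t j)
    have hs := abs_sign_le' (x k i - x l i)
    have h1 := abs_nonneg ((Real.sign (x k j - x t j) - Real.sign (x k j - x' t j))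
      - (Real.sign (x l j - x t j) - Real.sign (x l j - x' t j)))
    have h2 := abs_nonneg (Real.sign (x k i - x l i))
    nlinarith
  -- put it together
  have hD : |∑ k, ∑ l, ∑ m, T k l m| ≤ 4 * ((n:ℝ) - 1) * ((n:ℝ) - 2) := by
    rw [hsplit]
    calc |_| ≤ |∑ l ∈ e, ∑ m ∈ e, T t l m|
          + |(∑ k ∈ e, ∑ m ∈ e, T k t m) + (∑ k ∈ e, ∑ l ∈ e, T k l t)| := abs_add_le _ _
      _ ≤ |∑ l ∈ e, ∑ m ∈ e, T t l m|
          + (|∑ k ∈ e, ∑ m ∈ e, T k t m| + |∑ k ∈ e, ∑ l ∈ e, T k l t|) := by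
            linarith [abs_add_le (∑ k ∈ e, ∑ m ∈ e, T k t m) (∑ k ∈ e, ∑ l ∈ e, T k l t)]
      _ ≤ 4 * ((n:ℝ) - 1) * ((n:ℝ) - 2) := by linarith
  have h0 : (n:ℝ) ≠ 0 := by linarith
  have h1 : (n:ℝ) - 1 ≠ 0 := by intro hh; linarith
  have h2 : (n:ℝ) - 2 ≠ 0 := by intro hh; linarith
  have hc1 : (0:ℝ) < (n:ℝ) := by linarith
  have hc2 : (0:ℝ) < (n:ℝ) - 1 := by linarith
  have hc3 : (0:ℝ) < (n:ℝ) - 2 := by linarith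
  have hcpos : (0:ℝ) < 3 / ((n:ℝ) * ((n:ℝ) - 1) * ((n:ℝ) - 2)) :=
    div_pos (by norm_num) (mul_pos (mul_pos hc1 hc2) hc3)
  rw [key, abs_mul, abs_of_pos hcpos]
  calc (3 / ((n:ℝ) * ((n:ℝ) - 1) * ((n:ℝ) - 2))) * |∑ k, ∑ l, ∑ m, T k l m|
      ≤ (3 / ((n:ℝ) * ((n:ℝ) - 1) * ((n:ℝ) - 2))) * (4 * ((n:ℝ) - 1) * ((n:ℝ) - 2)) :=
        mul_le_mul_of_nonneg_left hD hcpos.le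
    _ = 12 / (n:ℝ) := by field_simp; ring
    _ ≤ 15 / (n:ℝ) := by
        have hnp : (0:ℝ) < (n:ℝ) := by linarith
        exact (div_le_div_iff_of_pos_right hnp).2 (by norm_num)
end

section
/- Let f: (ℝ^p)^n → ℝ satisfy the bounded differences property with constant c (changing any one argument changes f by at most c), and suppose X_1,...,X_n are independent. Then for any ε > 0, P(|f(X_1,...,X_n) − E f| ≥ ε) ≤ 2 exp(−2ε²/(n c²)). -/
open MeasureTheory ProbabilityTheory

open Real

lemma key_calc {θ : ℝ} (h0 : 0 ≤ θ) (h1 : θ ≤ 1) (h : ℝ) :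
    -θ * h + Real.log (1 - θ + θ * Real.exp h) ≤ h ^ 2 / 8 := by
  set D : ℝ → ℝ := fun x => 1 - θ + θ * Real.exp x with hDdef
  have hD : ∀ x, 0 < D x := by
    intro x
    rcases h0.eq_or_lt with h0' | h0'
    · simp [hDdef, ← h0']
    · have := mul_pos h0' (Real.exp_pos x)
      simp only [hDdef]; linarith
  set L : ℝ → ℝ := fun x => -(θ * x) + Real.log (D x) with hLdef
  set L1 : ℝ → ℝ := fun x => -θ + θ * Real.exp x / D x with hL1def
  have hD' : ∀ x, HasDerivAt D (θ * Real.exp x) x := by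
    intro x
    simpa [hDdef] using ((Real.hasDerivAt_exp x).const_mul θ).const_add (1 - θ)
  have hL : ∀ x, HasDerivAt L (L1 x) x := by
    intro x
    have hlog : HasDerivAt (fun y => Real.log (D y)) (θ * Real.exp x / D x) x :=
      (hD' x).log (hD x).ne'
    have h := (((hasDerivAt_id x).const_mul θ).neg.add hlog).congr_deriv
      (show -(θ * 1) + θ * Real.exp x / D x = L1 x by simp [hL1def])
    exact h
  set φ : ℝ → ℝ := fun x => x ^ 2 / 8 - L x with hφdef
  set φ1 : ℝ → ℝ := fun x => x / 4 - L1 x with hφ1def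
  have hφ : ∀ x, HasDerivAt φ (φ1 x) x := by
    intro x
    have h2 : HasDerivAt (fun y : ℝ => y ^ 2 / 8) (x / 4) x := by
      have := (hasDerivAt_pow 2 x).div_const 8
      simpa using this.congr_deriv (by ring)
    exact h2.sub (hL x)
  have hφ1 : ∀ x, HasDerivAt φ1
      (1 / 4 - (θ * Real.exp x / D x) * (1 - θ * Real.exp x / D x)) x := by
    intro x
    have hN : HasDerivAt (fun y => θ * Real.exp y) (θ * Real.exp x) x :=
      (Real.hasDerivAt_exp x).const_mul θ
    have hq : HasDerivAt (fun y => θ * Real.exp y / D y)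
        ((θ * Real.exp x * D x - θ * Real.exp x * (θ * Real.exp x)) / D x ^ 2) x :=
      hN.div (hD' x) (hD x).ne'
    have h4 : HasDerivAt (fun y : ℝ => y / 4) (1 / 4) x := by
      simpa using (hasDerivAt_id x).div_const 4
    have := h4.sub ((hasDerivAt_const x (-θ)).add hq)
    have heq : ∀ A B : ℝ, B ≠ 0 → (A * B - A * A) / B ^ 2 = A / B * (1 - A / B) := by
      intro A B hB; field_simp
    have heq' := heq (θ * Real.exp x) (D x) (hD x).ne'
    rw [heq', zero_add] at this
    exact this
  have hφ1mono : Monotone φ1 := by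
    refine monotone_of_deriv_nonneg (fun x => (hφ1 x).differentiableAt) (fun x => ?_)
    rw [(hφ1 x).deriv]
    nlinarith [sq_nonneg (θ * Real.exp x / D x - 1 / 2)]
  have hφ10 : φ1 0 = 0 := by
    simp [hφ1def, hL1def, hDdef]
  have hφ0 : φ 0 = 0 := by
    simp [hφdef, hLdef, hDdef]
  have key : 0 ≤ φ h := by
    rcases le_total 0 h with hh | hh
    · have : MonotoneOn φ (Set.Ici 0) := by
        refine monotoneOn_of_deriv_nonneg (convex_Ici 0)
          (continuous_iff_continuousAt.mpr (fun x => (hφ x).continuousAt)).continuousOn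
          (fun x _ => (hφ x).differentiableAt.differentiableWithinAt) (fun x hx => ?_)
        rw [(hφ x).deriv, ← hφ10]
        exact hφ1mono (le_of_lt (by simpa using hx))
      have := this (Set.self_mem_Ici) (by exact hh) hh
      linarith [hφ0 ▸ this]
    · have : AntitoneOn φ (Set.Iic 0) := by
        refine antitoneOn_of_deriv_nonpos (convex_Iic 0)
          (continuous_iff_continuousAt.mpr (fun x => (hφ x).continuousAt)).continuousOn
          (fun x _ => (hφ x).differentiableAt.differentiableWithinAt) (fun x hx => ?_)
        rw [(hφ x).deriv, ← hφ10]
        exact hφ1mono (le_of_lt (by simpa using hx))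
      have := this (by exact hh) Set.self_mem_Iic hh
      linarith [hφ0 ▸ this]
  have : L h ≤ h ^ 2 / 8 := by simp only [hφdef] at key; linarith
  simpa [hLdef, hDdef] using this

lemma integrable_of_abs_le {α : Type*} [MeasurableSpace α] {μ : Measure α} [IsFiniteMeasure μ]
    {g : α → ℝ} (hg : AEStronglyMeasurable g μ) {B : ℝ} (hB : ∀ x, |g x| ≤ B) :
    Integrable g μ :=
  (integrable_const B).mono' hg (Filter.Eventually.of_forall fun x => by
    rw [Real.norm_eq_abs]; exact hB x)

lemma hoeffding_integral {E : Type*} [MeasurableSpace E] (ν : Measure E)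
    [IsProbabilityMeasure ν] (g : E → ℝ) (hg : Measurable g) (lo c t : ℝ) (hc : 0 ≤ c)
    (hbd : ∀ a, g a ∈ Set.Icc lo (lo + c)) :
    ∫ a, Real.exp (t * g a) ∂ν ≤ Real.exp (t * ∫ a, g a ∂ν + t ^ 2 * c ^ 2 / 8) := by
  rcases hc.eq_or_lt with hc0 | hc0
  · -- c = 0 : g is constant lo
    have hg' : ∀ a, g a = lo := fun a => le_antisymm (by simpa [← hc0] using (hbd a).2) (hbd a).1
    have h1 : (fun a => Real.exp (t * g a)) = fun _ => Real.exp (t * lo) := by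
      funext a; rw [hg' a]
    have h2 : (fun a => g a) = fun _ => lo := funext hg'
    rw [h1, h2, integral_const, integral_const]
    simp [← hc0]
  · -- c > 0
    have hB : ∀ a, |g a| ≤ max |lo| |lo + c| := fun a =>
      abs_le_max_abs_abs (hbd a).1 (hbd a).2
    have hgi : Integrable g ν := integrable_of_abs_le hg.aestronglyMeasurable hB
    set m := ∫ a, g a ∂ν with hm
    have hmlo : lo ≤ m := by
      have := integral_mono (integrable_const lo) hgi (fun a => (hbd a).1)
      simpa using this
    have hmhi : m ≤ lo + c := by
      have := integral_mono hgi (integrable_const (lo + c)) (fun a => (hbd a).2)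
      simpa using this
    set α : ℝ := ((lo + c) * Real.exp (t * lo) - lo * Real.exp (t * (lo + c))) / c with hα
    set β : ℝ := (Real.exp (t * (lo + c)) - Real.exp (t * lo)) / c with hβ
    have hpt : ∀ a, Real.exp (t * g a) ≤ α + β * g a := by
      intro a
      set s : ℝ := (g a - lo) / c with hs
      have hs0 : 0 ≤ s := div_nonneg (by linarith [(hbd a).1]) hc0.le
      have hs1 : s ≤ 1 := by
        rw [hs, div_le_one hc0]; linarith [(hbd a).2]
      have hconv := convexOn_exp.2 (Set.mem_univ (t * lo)) (Set.mem_univ (t * (lo + c)))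
        (by linarith : (0:ℝ) ≤ 1 - s) hs0 (by ring)
      have hsc : s * c = g a - lo := by rw [hs]; field_simp
      have hx : (1 - s) • (t * lo) + s • (t * (lo + c)) = t * g a := by
        simp only [smul_eq_mul]; linear_combination t * hsc
      rw [hx] at hconv
      refine hconv.trans_eq ?_
      have hga : g a = lo + s * c := by linarith [hsc]
      simp only [smul_eq_mul, hα, hβ, hga]
      field_simp
      ring
    have hint_exp : Integrable (fun a => Real.exp (t * g a)) ν := by
      refine integrable_of_abs_le ((hg.const_mul t).exp).aestronglyMeasurable
        (B := Real.exp (|t| * max |lo| |lo + c|)) (fun a => ?_)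
      rw [abs_of_pos (Real.exp_pos _)]
      refine Real.exp_le_exp.2 ?_
      calc t * g a ≤ |t * g a| := le_abs_self _
        _ = |t| * |g a| := abs_mul _ _
        _ ≤ |t| * max |lo| |lo + c| := by
            exact mul_le_mul_of_nonneg_left (hB a) (abs_nonneg t)
    have hri : Integrable (fun a => α + β * g a) ν := (integrable_const α).add (hgi.const_mul β)
    have hstep1 : ∫ a, Real.exp (t * g a) ∂ν ≤ α + β * m := by
      have h2 := integral_mono hint_exp hri hpt
      have h3 : ∫ a, (α + β * g a) ∂ν = α + β * m := by
        rw [integral_add (integrable_const α) (hgi.const_mul β), integral_const,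
          integral_const_mul, probReal_univ, one_smul]
      linarith [h3 ▸ h2]
    refine hstep1.trans ?_
    -- now the analytic bound
    set θ : ℝ := (m - lo) / c with hθ
    have hθ0 : 0 ≤ θ := div_nonneg (by linarith) hc0.le
    have hθ1 : θ ≤ 1 := by rw [hθ, div_le_one hc0]; linarith
    have hkey := key_calc hθ0 hθ1 (t * c)
    have hDpos : 0 < 1 - θ + θ * Real.exp (t * c) := by
      rcases hθ0.eq_or_lt with h0' | h0'
      · simp [← h0']
      · have := mul_pos h0' (Real.exp_pos (t * c)); linarith
    have hlog : 1 - θ + θ * Real.exp (t * c) ≤ Real.exp (θ * (t * c) + (t * c) ^ 2 / 8) := by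
      have := Real.exp_le_exp.2 (by linarith : Real.log (1 - θ + θ * Real.exp (t * c))
        ≤ θ * (t * c) + (t * c) ^ 2 / 8)
      rwa [Real.exp_log hDpos] at this
    have hαβ : α + β * m = Real.exp (t * lo) * (1 - θ + θ * Real.exp (t * c)) := by
      have hec : Real.exp (t * (lo + c)) = Real.exp (t * lo) * Real.exp (t * c) := by
        rw [← Real.exp_add]; ring_nf
      rw [hα, hβ, hθ, hec]
      field_simp
      ring
    rw [hαβ]
    calc Real.exp (t * lo) * (1 - θ + θ * Real.exp (t * c))
        ≤ Real.exp (t * lo) * Real.exp (θ * (t * c) + (t * c) ^ 2 / 8) :=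
          mul_le_mul_of_nonneg_left hlog (Real.exp_pos _).le
      _ = Real.exp (t * lo + θ * (t * c) + (t * c) ^ 2 / 8) := by
          rw [← Real.exp_add]; ring_nf
      _ = Real.exp (t * m + t ^ 2 * c ^ 2 / 8) := by
          congr 1
          have : θ * (t * c) = t * (m - lo) := by rw [hθ]; field_simp
          rw [this]; ring

lemma bd_diff_bound {E : Type*} {n : ℕ} (f : (Fin n → E) → ℝ) (c : ℝ) (hc : 0 ≤ c)
    (hbd : ∀ (x : Fin n → E) (i : Fin n) (a : E), |f x - f (Function.update x i a)| ≤ c)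
    (x y : Fin n → E) : |f x - f y| ≤ n * c := by
  classical
  have key : ∀ s : Finset (Fin n), |f x - f (s.piecewise y x)| ≤ s.card * c := by
    intro s
    induction s using Finset.induction_on with
    | empty => simp
    | @insert i s his ih =>
      rw [Finset.piecewise_insert]
      calc |f x - f (Function.update (s.piecewise y x) i (y i))|
          ≤ |f x - f (s.piecewise y x)| +
            |f (s.piecewise y x) - f (Function.update (s.piecewise y x) i (y i))| := by
            have := abs_sub_le (f x) (f (s.piecewise y x))
              (f (Function.update (s.piecewise y x) i (y i)))
            linarith
        _ ≤ s.card * c + c := add_le_add ih (hbd _ _ _)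
        _ = (insert i s).card * c := by
            rw [Finset.card_insert_of_notMem his]; push_cast; ring
  have := key Finset.univ
  rwa [Finset.piecewise_univ, Finset.card_univ, Fintype.card_fin] at this

lemma insertNth_update' {E : Type*} {n : ℕ} (p : Fin (n + 1)) (a : E) (y : Fin n → E)
    (j : Fin n) (b : E) :
    p.insertNth a (Function.update y j b) =
      Function.update (p.insertNth a y : Fin (n + 1) → E) (p.succAbove j) b := by
  ext i
  cases i using p.succAboveCases with
  | x =>
    rw [Fin.insertNth_apply_same, Function.update_of_ne (Fin.succAbove_ne p j).symm,
      Fin.insertNth_apply_same]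
  | p k =>
    rw [Fin.insertNth_apply_succAbove]
    rcases eq_or_ne k j with rfl | hkj
    · rw [Function.update_self, Function.update_self]
    · rw [Function.update_of_ne hkj, Function.update_of_ne
        (fun h => hkj (Fin.succAbove_right_injective h)), Fin.insertNth_apply_succAbove]

lemma mgf_pi_le {E : Type*} [MeasurableSpace E] [Inhabited E] (c t : ℝ) (hc : 0 ≤ c) :
    ∀ (n : ℕ) (ν : Fin n → Measure E), (∀ i, IsProbabilityMeasure (ν i)) →
    ∀ (f : (Fin n → E) → ℝ), Measurable f →
    (∀ (x : Fin n → E) (i : Fin n) (a : E), |f x - f (Function.update x i a)| ≤ c) →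
    ∫ x, Real.exp (t * f x) ∂(Measure.pi ν) ≤
      Real.exp (t * ∫ x, f x ∂(Measure.pi ν) + t ^ 2 * n * c ^ 2 / 8) := by
  intro n
  induction n with
  | zero =>
    intro ν hν f hf hbd
    haveI := hν
    haveI : IsProbabilityMeasure (Measure.pi ν) := by infer_instance
    have hconst : ∀ x : Fin 0 → E, f x = f default := fun x => by
      congr 1; exact Subsingleton.elim x default
    have h1 : (fun x : Fin 0 → E => Real.exp (t * f x)) = fun _ => Real.exp (t * f default) := by
      funext x; rw [hconst x]
    have h2 : (fun x : Fin 0 → E => f x) = fun _ => f default := funext hconst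
    rw [h1, h2, integral_const, integral_const]
    simp
  | succ n IH =>
    intro ν hν f hf hbd
    haveI := hν
    set e := MeasurableEquiv.piFinSuccAbove (fun _ : Fin (n + 1) => E) 0 with he
    set ν0 := ν 0 with hν0
    set ρ := Measure.pi (fun j : Fin n => ν ((0 : Fin (n + 1)).succAbove j)) with hρ
    haveI : IsProbabilityMeasure ρ := by rw [hρ]; infer_instance
    haveI : IsProbabilityMeasure (Measure.pi ν) := by infer_instance
    have MP : MeasurePreserving e (Measure.pi ν) (ν0.prod ρ) :=
      measurePreserving_piFinSuccAbove ν 0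
    have hesymm : ∀ (a : E) (y : Fin n → E), e.symm (a, y) = (0 : Fin (n + 1)).insertNth a y :=
      fun a y => rfl
    -- boundedness of f
    set B : ℝ := |f default| + (n + 1) * c with hB
    have hfB : ∀ x, |f x| ≤ B := by
      intro x
      have := bd_diff_bound f c hc hbd x default
      have habs := abs_sub_abs_le_abs_sub (f x) (f default)
      rw [hB]; push_cast at this ⊢; linarith
    -- transfer integrals to the product
    have hint_transfer : ∀ (h : (Fin (n + 1) → E) → ℝ), Measurable h →
        ∫ x, h x ∂(Measure.pi ν) = ∫ z, h (e.symm z) ∂(ν0.prod ρ) := by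
      intro h hh
      rw [← MP.map_eq, integral_map (MP.measurable).aemeasurable]
      · simp
      · exact (hh.comp e.symm.measurable).aestronglyMeasurable
    -- conditional function
    set G : (Fin n → E) → E → ℝ := fun y a => f ((0 : Fin (n + 1)).insertNth a y) with hG
    have hGz : ∀ z : E × (Fin n → E), f (e.symm z) = G z.2 z.1 := fun z => rfl
    have hGmeas1 : ∀ y, Measurable (G y) := fun y =>
      hf.comp (e.symm.measurable.comp (measurable_id.prodMk measurable_const))
    set F : (Fin n → E) → ℝ := fun y => ∫ a, G y a ∂ν0 with hF
    have hKsm : StronglyMeasurable (fun q : (Fin n → E) × E => G q.1 q.2) :=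
      ((hf.comp (e.symm.measurable.comp measurable_swap)).stronglyMeasurable :)
    have hFsm : StronglyMeasurable F := hKsm.integral_prod_right'
    have hFB : ∀ y, |F y| ≤ B := by
      intro y
      have := norm_integral_le_of_norm_le_const (μ := ν0) (f := G y)
        (C := B) (Filter.Eventually.of_forall fun a => by rw [Real.norm_eq_abs]; exact hfB _)
      simpa using this
    -- pointwise Hoeffding
    have hpoint : ∀ y, ∫ a, Real.exp (t * G y a) ∂ν0 ≤
        Real.exp (t * F y + t ^ 2 * c ^ 2 / 8) := by
      intro y
      have hdiff : ∀ a a', |G y a - G y a'| ≤ c := by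
        intro a a'
        have hupd : (0 : Fin (n + 1)).insertNth a' y =
            Function.update ((0 : Fin (n + 1)).insertNth a y : Fin (n + 1) → E) 0 a' :=
          (Fin.update_insertNth _ _ _ _).symm
        have := hbd ((0 : Fin (n + 1)).insertNth a y) 0 a'
        rw [← hupd] at this
        exact this
      set lo := sInf (Set.range (G y)) with hlo_def
      have hbdd : BddBelow (Set.range (G y)) := by
        refine ⟨G y default - c, ?_⟩
        rintro _ ⟨a, rfl⟩
        linarith [(abs_le.1 (hdiff default a)).2]
      have hne : (Set.range (G y)).Nonempty := ⟨G y default, Set.mem_range_self _⟩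
      have hlo : ∀ a, lo ≤ G y a := fun a => csInf_le hbdd ⟨a, rfl⟩
      have hhi : ∀ a, G y a ≤ lo + c := by
        intro a
        have : G y a - c ≤ lo := by
          refine le_csInf hne ?_
          rintro _ ⟨a', rfl⟩
          linarith [(abs_le.1 (hdiff a a')).2]
        linarith
      exact hoeffding_integral ν0 (G y) (hGmeas1 y) lo c t hc (fun a => ⟨hlo a, hhi a⟩)
    -- F has bounded differences with the same constant
    have hFbd : ∀ (y : Fin n → E) (j : Fin n) (b : E),
        |F y - F (Function.update y j b)| ≤ c := by
      intro y j b
      have hint1 : Integrable (G y) ν0 :=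
        integrable_of_abs_le (hGmeas1 y).aestronglyMeasurable (fun a => hfB _)
      have hint2 : Integrable (G (Function.update y j b)) ν0 :=
        integrable_of_abs_le (hGmeas1 _).aestronglyMeasurable (fun a => hfB _)
      have hsub : F y - F (Function.update y j b)
          = ∫ a, (G y a - G (Function.update y j b) a) ∂ν0 := (integral_sub hint1 hint2).symm
      rw [hsub]
      have habs := norm_integral_le_of_norm_le_const (μ := ν0)
        (f := fun a => G y a - G (Function.update y j b) a) (C := c)
        (Filter.Eventually.of_forall fun a => by
          rw [Real.norm_eq_abs]
          show |G y a - G (Function.update y j b) a| ≤ c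
          have hupd : G (Function.update y j b) a =
              f (Function.update ((0 : Fin (n + 1)).insertNth a y : Fin (n + 1) → E)
                ((0 : Fin (n + 1)).succAbove j) b) := by
            rw [hG]; simp only []; rw [insertNth_update']
          rw [hupd]
          exact hbd _ _ _)
      simpa using habs
    -- integrability on the product
    have hexp_meas : Measurable (fun z : E × (Fin n → E) => Real.exp (t * f (e.symm z))) :=
      ((hf.comp e.symm.measurable).const_mul t).exp
    have hexp_bound : ∀ x : Fin (n + 1) → E, |Real.exp (t * f x)| ≤ Real.exp (|t| * B) := by
      intro x
      rw [abs_of_pos (Real.exp_pos _)]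
      refine Real.exp_le_exp.2 ?_
      calc t * f x ≤ |t * f x| := le_abs_self _
        _ = |t| * |f x| := abs_mul _ _
        _ ≤ |t| * B := mul_le_mul_of_nonneg_left (hfB x) (abs_nonneg t)
    have hint_exp_prod : Integrable (fun z : E × (Fin n → E) => Real.exp (t * f (e.symm z)))
        (ν0.prod ρ) :=
      integrable_of_abs_le hexp_meas.aestronglyMeasurable (fun z => hexp_bound _)
    have hint_f_prod : Integrable (fun z : E × (Fin n → E) => f (e.symm z)) (ν0.prod ρ) :=
      integrable_of_abs_le (hf.comp e.symm.measurable).aestronglyMeasurable (fun z => hfB _)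
    -- the two Fubini identities
    have hfub_exp : ∫ z, Real.exp (t * f (e.symm z)) ∂(ν0.prod ρ)
        = ∫ y, ∫ a, Real.exp (t * G y a) ∂ν0 ∂ρ := by
      rw [MeasureTheory.integral_prod _ hint_exp_prod]
      exact integral_integral_swap hint_exp_prod
    have hfub_f : ∫ z, f (e.symm z) ∂(ν0.prod ρ) = ∫ y, F y ∂ρ := by
      rw [MeasureTheory.integral_prod _ hint_f_prod]
      exact integral_integral_swap hint_f_prod
    -- integrability of the two functions of y
    have hin1 : Integrable (fun y => ∫ a, Real.exp (t * G y a) ∂ν0) ρ := by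
      have hK2 : StronglyMeasurable (fun q : (Fin n → E) × E => Real.exp (t * G q.1 q.2)) :=
        ((((hf.comp (e.symm.measurable.comp measurable_swap)).const_mul t).exp).stronglyMeasurable :)
      refine integrable_of_abs_le (hK2.integral_prod_right').aestronglyMeasurable
        (B := Real.exp (|t| * B)) (fun y => ?_)
      have := norm_integral_le_of_norm_le_const (μ := ν0)
        (f := fun a => Real.exp (t * G y a)) (C := Real.exp (|t| * B))
        (Filter.Eventually.of_forall fun a => by
          rw [Real.norm_eq_abs]; exact hexp_bound _)
      simpa using this
    have hin2 : Integrable (fun y => Real.exp (t * F y + t ^ 2 * c ^ 2 / 8)) ρ := by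
      refine integrable_of_abs_le
        (((hFsm.measurable.const_mul t).add_const _).exp).aestronglyMeasurable
        (B := Real.exp (|t| * B + t ^ 2 * c ^ 2 / 8)) (fun y => ?_)
      rw [abs_of_pos (Real.exp_pos _)]
      refine Real.exp_le_exp.2 (add_le_add_left ?_ _)
      calc t * F y ≤ |t * F y| := le_abs_self _
        _ = |t| * |F y| := abs_mul _ _
        _ ≤ |t| * B := mul_le_mul_of_nonneg_left (hFB y) (abs_nonneg t)
    -- apply IH to F
    have hIH := IH (fun j => ν ((0 : Fin (n + 1)).succAbove j)) (fun j => hν _)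
      F hFsm.measurable hFbd
    -- main chain
    calc ∫ x, Real.exp (t * f x) ∂(Measure.pi ν)
        = ∫ z, Real.exp (t * f (e.symm z)) ∂(ν0.prod ρ) :=
          hint_transfer _ ((hf.const_mul t).exp)
      _ = ∫ y, ∫ a, Real.exp (t * G y a) ∂ν0 ∂ρ := hfub_exp
      _ ≤ ∫ y, Real.exp (t * F y + t ^ 2 * c ^ 2 / 8) ∂ρ :=
          integral_mono hin1 hin2 hpoint
      _ = Real.exp (t ^ 2 * c ^ 2 / 8) * ∫ y, Real.exp (t * F y) ∂ρ := by
          rw [← integral_const_mul]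
          congr 1; funext y; rw [Real.exp_add]; ring
      _ ≤ Real.exp (t ^ 2 * c ^ 2 / 8) *
            Real.exp (t * ∫ y, F y ∂ρ + t ^ 2 * n * c ^ 2 / 8) :=
          mul_le_mul_of_nonneg_left hIH (Real.exp_pos _).le
      _ = Real.exp (t * ∫ x, f x ∂(Measure.pi ν) + t ^ 2 * (n + 1 : ℕ) * c ^ 2 / 8) := by
          rw [← Real.exp_add]
          congr 1
          rw [show ∫ y, F y ∂ρ = ∫ x, f x ∂(Measure.pi ν) from by
            rw [hint_transfer f hf, hfub_f]]
          push_cast; ring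

lemma tail_bound {E : Type*} [MeasurableSpace E] [Inhabited E] {n : ℕ} (hn : 0 < n)
    (ν : Fin n → Measure E) (hν : ∀ i, IsProbabilityMeasure (ν i))
    (f : (Fin n → E) → ℝ) (hf : Measurable f) (c : ℝ) (hc : 0 < c)
    (hbd : ∀ (x : Fin n → E) (i : Fin n) (a : E), |f x - f (Function.update x i a)| ≤ c)
    (ε : ℝ) (hε : 0 < ε) :
    Measure.pi ν {x | ε ≤ f x - ∫ y, f y ∂Measure.pi ν}
      ≤ ENNReal.ofReal (Real.exp (-2 * ε ^ 2 / (n * c ^ 2))) := by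
  haveI := hν
  haveI : IsProbabilityMeasure (Measure.pi ν) := by infer_instance
  set Pr := Measure.pi ν with hPr
  set m := ∫ y, f y ∂Pr with hm
  have hn' : (0 : ℝ) < n := by exact_mod_cast hn
  set t : ℝ := 4 * ε / (n * c ^ 2) with ht_def
  have ht : 0 < t := by positivity
  have hB : ∀ x, |f x| ≤ |f default| + n * c := by
    intro x
    have := bd_diff_bound f c hc.le hbd x default
    have habs := abs_sub_abs_le_abs_sub (f x) (f default)
    linarith
  have h_int : Integrable (fun x => Real.exp (t * (f x - m))) Pr := by
    refine integrable_of_abs_le (((hf.sub_const m).const_mul t).exp).aestronglyMeasurable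
      (B := Real.exp (|t| * (|f default| + n * c + |m|))) (fun x => ?_)
    rw [abs_of_pos (Real.exp_pos _)]
    refine Real.exp_le_exp.2 ?_
    calc t * (f x - m) ≤ |t * (f x - m)| := le_abs_self _
      _ = |t| * |f x - m| := abs_mul _ _
      _ ≤ |t| * (|f default| + n * c + |m|) := by
          refine mul_le_mul_of_nonneg_left ?_ (abs_nonneg t)
          calc |f x - m| ≤ |f x| + |m| := abs_sub _ _
            _ ≤ |f default| + ↑n * c + |m| := by linarith [hB x]
  have hmgf : mgf (fun x => f x - m) Pr t ≤ Real.exp (t ^ 2 * n * c ^ 2 / 8) := by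
    have h1 : mgf (fun x => f x - m) Pr t = (∫ x, Real.exp (t * f x) ∂Pr) * Real.exp (-(t * m)) := by
      rw [mgf, ← integral_mul_const]
      congr 1; funext x; rw [← Real.exp_add]; ring_nf
    rw [h1]
    have h2 := mgf_pi_le c t hc.le n ν hν f hf hbd
    calc (∫ x, Real.exp (t * f x) ∂Pr) * Real.exp (-(t * m))
        ≤ Real.exp (t * m + t ^ 2 * n * c ^ 2 / 8) * Real.exp (-(t * m)) :=
          mul_le_mul_of_nonneg_right h2 (Real.exp_pos _).le
      _ = Real.exp (t ^ 2 * n * c ^ 2 / 8) := by rw [← Real.exp_add]; ring_nf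
  have hchern := measure_ge_le_exp_mul_mgf (μ := Pr) (X := fun x => f x - m) ε ht.le h_int
  have hfinal : (Pr {x | ε ≤ f x - m}).toReal ≤ Real.exp (-2 * ε ^ 2 / (n * c ^ 2)) := by
    refine hchern.trans ?_
    calc Real.exp (-t * ε) * mgf (fun x => f x - m) Pr t
        ≤ Real.exp (-t * ε) * Real.exp (t ^ 2 * n * c ^ 2 / 8) :=
          mul_le_mul_of_nonneg_left hmgf (Real.exp_pos _).le
      _ = Real.exp (-2 * ε ^ 2 / (n * c ^ 2)) := by
          rw [← Real.exp_add]
          congr 1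
          rw [ht_def]
          field_simp
          ring
  refine (ENNReal.le_ofReal_iff_toReal_le (measure_ne_top _ _) (Real.exp_pos _).le).2 hfinal

/-- McDiarmid's bounded differences inequality: if `f` has the bounded differences
property with constant `c` and `X_1, ..., X_n` are independent, then
`P(|f(X) − E f(X)| ≥ ε) ≤ 2 exp(−2ε²/(n c²))`. -/
theorem mcdiarmid_bounded_differences
    {Ω : Type*} [MeasurableSpace Ω] (μ : Measure Ω) [IsProbabilityMeasure μ]
    {n p : ℕ} (X : Fin n → Ω → (Fin p → ℝ)) (hX : ∀ i, Measurable (X i))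
    (hind : iIndepFun X μ)
    (f : (Fin n → (Fin p → ℝ)) → ℝ) (hf : Measurable f)
    (c : ℝ) (hc : 0 < c)
    (hbd : ∀ (x : Fin n → (Fin p → ℝ)) (i : Fin n) (a : Fin p → ℝ),
      |f x - f (Function.update x i a)| ≤ c)
    (ε : ℝ) (hε : 0 < ε) :
    μ {ω | ε ≤ |f (fun i => X i ω) - ∫ ω', f (fun i => X i ω') ∂μ|}
      ≤ ENNReal.ofReal (2 * Real.exp (-2 * ε ^ 2 / ((n : ℝ) * c ^ 2))) := by
  rcases Nat.eq_zero_or_pos n with hn | hn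
  · subst hn
    have h0 : ∀ ω, f (fun i => X i ω) = f default := fun ω => by
      congr 1; exact Subsingleton.elim _ _
    have h1 : ∫ ω', f (fun i => X i ω') ∂μ = f default := by
      have : (fun ω' => f (fun i => X i ω')) = fun _ => f default := funext h0
      rw [this, integral_const]; simp
    have hempty : {ω | ε ≤ |f (fun i => X i ω) - ∫ ω', f (fun i => X i ω') ∂μ|} = ∅ := by
      ext ω; simp [h0, h1, hε.not_ge]
    rw [hempty]
    simp
  · -- the nondegenerate case
    set T : Ω → (Fin n → (Fin p → ℝ)) := fun ω i => X i ω with hT_def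
    have hT : Measurable T := measurable_pi_lambda _ hX
    set Pr := μ.map T with hPr_def
    haveI : IsProbabilityMeasure Pr := Measure.isProbabilityMeasure_map hT.aemeasurable
    haveI hprob : ∀ i, IsProbabilityMeasure (μ.map (X i)) := fun i =>
      Measure.isProbabilityMeasure_map (hX i).aemeasurable
    haveI : ∀ i, SigmaFinite (μ.map (X i)) := fun i => inferInstance
    have hpi : Pr = Measure.pi (fun i => μ.map (X i)) := by
      refine (Measure.pi_eq (μ := fun i => μ.map (X i)) fun s hs => ?_).symm
      rw [hPr_def, Measure.map_apply hT (MeasurableSet.univ_pi hs)]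
      have hpre : T ⁻¹' Set.pi Set.univ s = ⋂ i, X i ⁻¹' s i := by
        ext ω; simp [hT_def, Set.mem_pi]
      rw [hpre, hind.meas_iInter (fun i => ⟨s i, hs i, rfl⟩)]
      exact Finset.prod_congr rfl fun i _ => (Measure.map_apply (hX i) (hs i)).symm
    set m0 := ∫ x, f x ∂Pr with hm0_def
    have hm0 : ∫ ω', f (fun i => X i ω') ∂μ = m0 := by
      rw [hm0_def, hPr_def, integral_map hT.aemeasurable hf.aestronglyMeasurable]
    have hsetS : MeasurableSet {x : Fin n → Fin p → ℝ | ε ≤ |f x - m0|} :=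
      measurableSet_le measurable_const ((hf.sub measurable_const).abs)
    have htrans : μ {ω | ε ≤ |f (fun i => X i ω) - ∫ ω', f (fun i => X i ω') ∂μ|}
        = Pr {x | ε ≤ |f x - m0|} := by
      rw [hm0, hPr_def, Measure.map_apply hT hsetS]
      rfl
    rw [htrans]
    -- union bound for the two tails
    have hsub : {x : Fin n → Fin p → ℝ | ε ≤ |f x - m0|} ⊆
        {x | ε ≤ f x - m0} ∪ {x | ε ≤ (fun x => -f x) x - ∫ y, (fun x => -f x) y ∂Pr} := by
      intro x hx
      simp only [Set.mem_setOf_eq] at hx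
      rcases le_abs.1 hx with h | h
      · exact Or.inl h
      · refine Or.inr ?_
        simp only [Set.mem_setOf_eq, integral_neg]
        rw [← hm0_def]
        linarith
    have hbd' : ∀ (x : Fin n → (Fin p → ℝ)) (i : Fin n) (a : Fin p → ℝ),
        |(fun x => -f x) x - (fun x => -f x) (Function.update x i a)| ≤ c := by
      intro x i a
      simp only [neg_sub_neg]
      rw [abs_sub_comm]
      exact hbd x i a
    have h1 : Pr {x | ε ≤ f x - m0} ≤ ENNReal.ofReal (Real.exp (-2 * ε ^ 2 / (n * c ^ 2))) := by
      rw [hpi, hm0_def, hpi]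
      exact tail_bound hn _ hprob f hf c hc hbd ε hε
    have h2 : Pr {x | ε ≤ (fun x => -f x) x - ∫ y, (fun x => -f x) y ∂Pr}
        ≤ ENNReal.ofReal (Real.exp (-2 * ε ^ 2 / (n * c ^ 2))) := by
      rw [hpi]
      exact tail_bound hn _ hprob _ hf.neg c hc hbd' ε hε
    calc Pr {x | ε ≤ |f x - m0|}
        ≤ Pr ({x | ε ≤ f x - m0} ∪
            {x | ε ≤ (fun x => -f x) x - ∫ y, (fun x => -f x) y ∂Pr}) := measure_mono hsub
      _ ≤ Pr {x | ε ≤ f x - m0} +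
            Pr {x | ε ≤ (fun x => -f x) x - ∫ y, (fun x => -f x) y ∂Pr} := measure_union_le _ _
      _ ≤ ENNReal.ofReal (Real.exp (-2 * ε ^ 2 / (n * c ^ 2))) +
            ENNReal.ofReal (Real.exp (-2 * ε ^ 2 / (n * c ^ 2))) := add_le_add h1 h2
      _ = ENNReal.ofReal (2 * Real.exp (-2 * ε ^ 2 / ((n : ℝ) * c ^ 2))) := by
          rw [← ENNReal.ofReal_add (Real.exp_pos _).le (Real.exp_pos _).le]
          congr 1; ring
end
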